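/- For the two-qubit depolarizing channel Γ_θ⊗Γ_θ with Γ_θ(ρ) = θρ + (1−θ)I/2, applied to the input ρ_λ^± = λ|ψ_±⟩⟨ψ_±| + (1−λ)I/4 (λ ∈ (0,1), θ ∈ (0,1)), the SLD Fisher information of the output family in θ equals 12θ²λ² / ((1−θ²λ)(1+3θ²λ)). -/

import Mathlib

open Matrix Kronecker
noncomputable section

/-- Partial trace over the first qubit. -/
def ptrace1 (M : Matrix (Fin 2 × Fin 2) (Fin 2 × Fin 2) ℂ) : Matrix (Fin 2) (Fin 2) ℂ :=
  Matrix.of fun j l => ∑ i : Fin 2, M (i, j) (i, l)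

/-- Partial trace over the second qubit. -/
def ptrace2 (M : Matrix (Fin 2 × Fin 2) (Fin 2 × Fin 2) ℂ) : Matrix (Fin 2) (Fin 2) ℂ :=
  Matrix.of fun i k => ∑ j : Fin 2, M (i, j) (k, j)

/-- The depolarizing channel `Γ_t ⊗ id` acting on the first qubit. -/
def depolFst (t : ℝ) (M : Matrix (Fin 2 × Fin 2) (Fin 2 × Fin 2) ℂ) :
    Matrix (Fin 2 × Fin 2) (Fin 2 × Fin 2) ℂ :=
  (t : ℂ) • M + (((1 - t) / 2 : ℝ) : ℂ) • ((1 : Matrix (Fin 2) (Fin 2) ℂ) ⊗ₖ ptrace1 M)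

/-- The depolarizing channel `id ⊗ Γ_t` acting on the second qubit. -/
def depolSnd (t : ℝ) (M : Matrix (Fin 2 × Fin 2) (Fin 2 × Fin 2) ℂ) :
    Matrix (Fin 2 × Fin 2) (Fin 2 × Fin 2) ℂ :=
  (t : ℂ) • M + (((1 - t) / 2 : ℝ) : ℂ) • (ptrace2 M ⊗ₖ (1 : Matrix (Fin 2) (Fin 2) ℂ))

/-- The two-qubit depolarizing channel `Γ_t ⊗ Γ_t`. -/
def depol2 (t : ℝ) (M : Matrix (Fin 2 × Fin 2) (Fin 2 × Fin 2) ℂ) :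
    Matrix (Fin 2 × Fin 2) (Fin 2 × Fin 2) ℂ :=
  depolSnd t (depolFst t M)

/-- `|ψ_±⟩ = (|01⟩ ± |10⟩)/√2`, with sign `ε = ±1`. -/
def ψpm (ε : ℝ) : Fin 2 × Fin 2 → ℂ := fun p =>
  if p = (0, 1) then ((Real.sqrt 2)⁻¹ : ℝ)
  else if p = (1, 0) then ((ε : ℂ) * ((Real.sqrt 2)⁻¹ : ℝ)) else 0

/-- `ρ_λ^± = λ|ψ_±⟩⟨ψ_±| + (1-λ)I/4`. -/
def rhoPM (ε l : ℝ) : Matrix (Fin 2 × Fin 2) (Fin 2 × Fin 2) ℂ :=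
  (l : ℂ) • vecMulVec (ψpm ε) (star (ψpm ε)) + (((1 - l) / 4 : ℝ) : ℂ) • 1

/-!
The one-qubit marginals of `rhoPM ε p` are maximally mixed, so each local depolarizing channel
only rescales the weight on `|ψ_±⟩`: `Γ_t ⊗ id` and `id ⊗ Γ_t` both send `rhoPM ε p` to
`rhoPM ε (t p)`. Hence the output is `rhoPM ε (θ²λ)`, whose spectral projections `P = |ψ_±⟩⟨ψ_±|`
and `1 - P` do not depend on `θ`, with eigenvalues `a = (1 + 3θ²λ)/4` (rank one) and
`b = (1 - θ²λ)/4` (rank three). Compressing the SLD equation `ρ' = (ρL + Lρ)/2` by `P` gives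
`a' P = a PLP`, and likewise for `1 - P`, so `tr(L ρ') = a'²/a + 3 b'²/b`.
-/

section SLD

variable {K n : Type*} [Field K] [Fintype n] [DecidableEq n]

def IsSLD (ρ ρ' L : Matrix n n K) : Prop :=
  ρ' = (1 / 2 : K) • (ρ * L + L * ρ)

theorem IsSLD.trace_mul_eq_of_eigenprojection [NeZero (2 : K)] {ρ ρ' L P : Matrix n n K}
    {a a' : K} (hL : IsSLD ρ ρ' L) (hP : IsIdempotentElem P) (hρP : ρ * P = a • P)
    (hPρ : P * ρ = a • P) (hρ'P : P * ρ' * P = a' • P) (ha : a ≠ 0) :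
    (L * P).trace = a' / a * P.trace := by
  have hcompress : a' • P = a • (P * L * P) := calc
    a' • P = P * ρ' * P := hρ'P.symm
    _ = (1 / 2 : K) • (P * ρ * L * P + P * L * (ρ * P)) := by
      rw [hL]; simp only [mul_add, add_mul, mul_smul_comm, smul_mul_assoc, mul_assoc]
    _ = a • (P * L * P) := by
      rw [hPρ, hρP, smul_mul_assoc, smul_mul_assoc, mul_smul_comm, ← two_smul K, smul_smul,
        one_div, inv_mul_cancel₀ two_ne_zero, one_smul]
  have htrace : (P * L * P).trace = (L * P).trace := by
    rw [trace_mul_cycle, hP.eq, trace_mul_comm]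
  rw [div_mul_eq_mul_div, eq_div_iff ha, mul_comm, ← htrace, ← smul_eq_mul, ← trace_smul,
    ← hcompress, trace_smul, smul_eq_mul]

theorem IsSLD.trace_mul_eq_of_two_level [NeZero (2 : K)] {L P : Matrix n n K} {a b a' b' : K}
    (hL : IsSLD (a • P + b • (1 - P)) (a' • P + b' • (1 - P)) L) (hP : IsIdempotentElem P)
    (ha : a ≠ 0) (hb : b ≠ 0) :
    (L * (a' • P + b' • (1 - P))).trace
      = a' ^ 2 / a * P.trace + b' ^ 2 / b * (1 - P).trace := by
  have hQ := hP.one_sub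
  have hPQ := hP.mul_one_sub_self
  have hQP := hP.one_sub_mul_self
  have hupper := hL.trace_mul_eq_of_eigenprojection (a' := a') hP
    (by simp [add_mul, hP.eq, hQP]) (by simp [mul_add, hP.eq, hPQ])
    (by simp [mul_add, hP.eq, hPQ]) ha
  have hlower := hL.trace_mul_eq_of_eigenprojection (a' := b') hQ
    (by simp [add_mul, hQ.eq, hPQ]) (by simp [mul_add, hQ.eq, hQP])
    (by simp [mul_add, hQ.eq, hQP]) hb
  rw [mul_add, mul_smul_comm, mul_smul_comm, trace_add, trace_smul, trace_smul, smul_eq_mul,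
    smul_eq_mul, hupper, hlower]
  ring

end SLD

section PartialTrace

variable (M N : Matrix (Fin 2 × Fin 2) (Fin 2 × Fin 2) ℂ) (c : ℂ)

theorem ptrace1_add : ptrace1 (M + N) = ptrace1 M + ptrace1 N := by
  ext j k; simp [ptrace1, Finset.sum_add_distrib]

theorem ptrace2_add : ptrace2 (M + N) = ptrace2 M + ptrace2 N := by
  ext j k; simp [ptrace2, Finset.sum_add_distrib]

theorem ptrace1_smul : ptrace1 (c • M) = c • ptrace1 M := by
  ext j k; simp [ptrace1, mul_add]

theorem ptrace2_smul : ptrace2 (c • M) = c • ptrace2 M := by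
  ext j k; simp [ptrace2, mul_add]

theorem ptrace1_one : ptrace1 1 = (2 : ℂ) • 1 := by
  ext j k; fin_cases j <;> fin_cases k <;> simp [ptrace1, one_apply]

theorem ptrace2_one : ptrace2 1 = (2 : ℂ) • 1 := by
  ext j k; fin_cases j <;> fin_cases k <;> simp [ptrace2, one_apply]

end PartialTrace

theorem ofReal_inv_sqrt_two_sq : ((Real.sqrt 2 : ℂ)⁻¹) ^ 2 = 1 / 2 := by
  rw [inv_pow, ← Complex.ofReal_pow, Real.sq_sqrt zero_le_two]
  norm_num

abbrev bellProj (ε : ℝ) : Matrix (Fin 2 × Fin 2) (Fin 2 × Fin 2) ℂ :=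
  vecMulVec (ψpm ε) (star (ψpm ε))

section Bell

variable {ε : ℝ}

theorem star_ψpm_dotProduct_self (hε : ε ^ 2 = 1) : star (ψpm ε) ⬝ᵥ ψpm ε = 1 := by
  have hε' : (ε : ℂ) ^ 2 = 1 := by exact_mod_cast hε
  simp [dotProduct, Fintype.sum_prod_type, ψpm]
  linear_combination (1 + (ε : ℂ) ^ 2) * ofReal_inv_sqrt_two_sq + hε' / 2

theorem isIdempotentElem_bellProj (hε : ε ^ 2 = 1) : IsIdempotentElem (bellProj ε) := by
  rw [IsIdempotentElem, vecMulVec_mul_vecMulVec, star_ψpm_dotProduct_self hε, one_smul]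

theorem trace_bellProj (hε : ε ^ 2 = 1) : (bellProj ε).trace = 1 := by
  rw [trace_vecMulVec, dotProduct_comm, star_ψpm_dotProduct_self hε]

theorem ptrace1_bellProj (hε : ε ^ 2 = 1) : ptrace1 (bellProj ε) = (1 / 2 : ℂ) • 1 := by
  have hε' : (ε : ℂ) ^ 2 = 1 := by exact_mod_cast hε
  ext j k
  fin_cases j <;> fin_cases k <;> simp [ptrace1, vecMulVec_apply, ψpm]
  all_goals first
    | linear_combination ofReal_inv_sqrt_two_sq
    | linear_combination (ε : ℂ) ^ 2 * ofReal_inv_sqrt_two_sq + hε' / 2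

theorem ptrace2_bellProj (hε : ε ^ 2 = 1) : ptrace2 (bellProj ε) = (1 / 2 : ℂ) • 1 := by
  have hε' : (ε : ℂ) ^ 2 = 1 := by exact_mod_cast hε
  ext j k
  fin_cases j <;> fin_cases k <;> simp [ptrace2, vecMulVec_apply, ψpm]
  all_goals first
    | linear_combination ofReal_inv_sqrt_two_sq
    | linear_combination (ε : ℂ) ^ 2 * ofReal_inv_sqrt_two_sq + hε' / 2

theorem ptrace1_rhoPM (hε : ε ^ 2 = 1) (p : ℝ) : ptrace1 (rhoPM ε p) = (1 / 2 : ℂ) • 1 := by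
  rw [rhoPM, ptrace1_add, ptrace1_smul, ptrace1_smul, ptrace1_bellProj hε, ptrace1_one]
  push_cast
  module

theorem ptrace2_rhoPM (hε : ε ^ 2 = 1) (p : ℝ) : ptrace2 (rhoPM ε p) = (1 / 2 : ℂ) • 1 := by
  rw [rhoPM, ptrace2_add, ptrace2_smul, ptrace2_smul, ptrace2_bellProj hε, ptrace2_one]
  push_cast
  module

theorem depolFst_rhoPM (hε : ε ^ 2 = 1) (t p : ℝ) :
    depolFst t (rhoPM ε p) = rhoPM ε (t * p) := by
  rw [depolFst, ptrace1_rhoPM hε, kronecker_smul, one_kronecker_one, rhoPM, rhoPM]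
  push_cast
  module

theorem depolSnd_rhoPM (hε : ε ^ 2 = 1) (t p : ℝ) :
    depolSnd t (rhoPM ε p) = rhoPM ε (t * p) := by
  rw [depolSnd, ptrace2_rhoPM hε, smul_kronecker, one_kronecker_one, rhoPM, rhoPM]
  push_cast
  module

theorem depol2_rhoPM (hε : ε ^ 2 = 1) (t p : ℝ) :
    depol2 t (rhoPM ε p) = rhoPM ε (t ^ 2 * p) := by
  rw [depol2, depolFst_rhoPM hε, depolSnd_rhoPM hε, sq, mul_assoc]

theorem rhoPM_eq_two_level (p : ℝ) :
    rhoPM ε p = (((1 + 3 * p) / 4 : ℝ) : ℂ) • bellProj ε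
      + (((1 - p) / 4 : ℝ) : ℂ) • (1 - bellProj ε) := by
  rw [rhoPM]
  push_cast
  module

theorem hasDerivAt_rhoPM_apply {q : ℝ → ℝ} {q' x : ℝ} (hq : HasDerivAt q q' x)
    (i j : Fin 2 × Fin 2) :
    HasDerivAt (fun t => rhoPM ε (q t) i j)
      ((((3 * q' / 4 : ℝ) : ℂ) • bellProj ε + ((-q' / 4 : ℝ) : ℂ) • (1 - bellProj ε)) i j) x := by
  have haffine : (fun t => rhoPM ε (q t) i j) = fun t =>
      (q t : ℂ) * (bellProj ε i j - (1 : Matrix _ _ ℂ) i j / 4) + (1 : Matrix _ _ ℂ) i j / 4 := by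
    funext t
    simp only [rhoPM, Matrix.add_apply, Matrix.smul_apply, smul_eq_mul]
    push_cast
    ring
  rw [haffine]
  refine ((hq.ofReal_comp.mul_const _).add_const _).congr_deriv ?_
  simp only [Matrix.add_apply, Matrix.smul_apply, Matrix.sub_apply, smul_eq_mul]
  push_cast
  ring

end Bell

theorem depol2_fisher_rhoPM_general
    (ε : ℝ) (hε : ε = 1 ∨ ε = -1)
    (l : ℝ) (hl : l ∈ Set.Ioo (0 : ℝ) 1) (θ : ℝ) (hθ : θ ∈ Set.Ioo (0 : ℝ) 1)
    (ρ' : Matrix (Fin 2 × Fin 2) (Fin 2 × Fin 2) ℂ)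
    (hρ' : ∀ i j, HasDerivAt (fun t => depol2 t (rhoPM ε l) i j) (ρ' i j) θ)
    (L : Matrix (Fin 2 × Fin 2) (Fin 2 × Fin 2) ℂ)
    (hSLD : ρ' = (1 / 2 : ℂ) • (depol2 θ (rhoPM ε l) * L + L * depol2 θ (rhoPM ε l))) :
    ((L * ρ').trace).re
      = 12 * θ ^ 2 * l ^ 2 / ((1 - θ ^ 2 * l) * (1 + 3 * θ ^ 2 * l)) := by
  have hε2 : ε ^ 2 = 1 := by rcases hε with rfl | rfl <;> norm_num
  obtain ⟨hl0, hl1⟩ := hl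
  obtain ⟨hθ0, hθ1⟩ := hθ
  have hlower : 0 < 1 - θ ^ 2 * l := by nlinarith [mul_pos (mul_pos hθ0 hθ0) hl0]
  have hupper : 0 < 1 + 3 * θ ^ 2 * l := by positivity
  have hderiv : ρ' = (((3 * (2 * θ * l) / 4 : ℝ) : ℂ) • bellProj ε
      + ((-(2 * θ * l) / 4 : ℝ) : ℂ) • (1 - bellProj ε)) := by
    ext i j
    refine (hρ' i j).unique ?_
    simp_rw [depol2_rhoPM hε2]
    refine hasDerivAt_rhoPM_apply ?_ i j
    simpa using (hasDerivAt_pow 2 θ).mul_const l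
  rw [depol2_rhoPM hε2, rhoPM_eq_two_level, hderiv] at hSLD
  rw [hderiv, IsSLD.trace_mul_eq_of_two_level hSLD (isIdempotentElem_bellProj hε2) ?_ ?_,
    trace_sub, trace_one, trace_bellProj hε2]
  · have hcard : (Fintype.card (Fin 2 × Fin 2) : ℂ) - 1 = ((3 : ℝ) : ℂ) := by norm_num
    rw [hcard, ← Complex.ofReal_one]
    norm_cast
    field_simp
    ring
  · exact Complex.ofReal_ne_zero.mpr (by positivity)
  · exact Complex.ofReal_ne_zero.mpr (div_pos hlower four_pos).ne'

/-- The SLD Fisher information in `θ` of `(Γ_θ⊗Γ_θ)(ρ_λ^±)` equals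
`12θ²λ² / ((1-θ²λ)(1+3θ²λ))`. -/
theorem depol2_fisher_rhoPM
    (ε : ℝ) (hε : ε = 1 ∨ ε = -1)
    (l : ℝ) (hl : l ∈ Set.Ioo (0 : ℝ) 1) (θ : ℝ) (hθ : θ ∈ Set.Ioo (0 : ℝ) 1)
    (ρ' : Matrix (Fin 2 × Fin 2) (Fin 2 × Fin 2) ℂ)
    (hρ' : ∀ i j, HasDerivAt (fun t => depol2 t (rhoPM ε l) i j) (ρ' i j) θ)
    (L : Matrix (Fin 2 × Fin 2) (Fin 2 × Fin 2) ℂ) (hL : L.IsHermitian)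
    (hSLD : ρ' = (1 / 2 : ℂ) • (depol2 θ (rhoPM ε l) * L + L * depol2 θ (rhoPM ε l))) :
    ((L * ρ').trace).re
      = 12 * θ ^ 2 * l ^ 2 / ((1 - θ ^ 2 * l) * (1 + 3 * θ ^ 2 * l)) :=
  depol2_fisher_rhoPM_general ε hε l hl θ hθ ρ' hρ' L hSLD
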